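/- Let t, s ≥ 0 and let f, g ∈ 𝔻 satisfy artanh |f| ≤ t and artanh |g| ≤ s. Set o := (0,0), x := (tanh t, f) and y := (−tanh s, g) in the bidisc 𝔻². Then the Gromov product of x and y with respect to o for the Kobayashi distance d₂ of the bidisc vanishes: (1/2)·(d₂(x, o) + d₂(y, o) − d₂(x, y)) = 0. -/

import Mathlib

/-!
The origin lies on the real geodesic of the first factor between `tanh t` and `-tanh s`, so the
first coordinates are at Poincaré distance `t + s`. In the second factor the triangle inequality
through `0` gives `ρ(f, g) ≤ artanh |f| + artanh |g| ≤ t + s`. Hence `d₂(x, o) = t`,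
`d₂(y, o) = s` and `d₂(x, y) = t + s`.
-/

open Filter Set

noncomputable section

/-- The inverse hyperbolic tangent: `artanh r = (1/2) log ((1+r)/(1-r))`. -/
def artanh (r : ℝ) : ℝ := (1 / 2) * Real.log ((1 + r) / (1 - r))

/-- The Poincaré (Kobayashi) distance on the unit disc
`ρ(z,w) = artanh |(z - w)/(1 - conj w * z)|`. -/
def pd (z w : ℂ) : ℝ := artanh (‖(z - w) / (1 - (starRingEnd ℂ) w * z)‖)

/-- The Kobayashi distance of the bidisc. -/
def kd2 (z w : ℂ × ℂ) : ℝ := max (pd z.1 w.1) (pd z.2 w.2)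

theorem Real.tanh_add (x y : ℝ) :
    Real.tanh (x + y) = (Real.tanh x + Real.tanh y) / (1 + Real.tanh x * Real.tanh y) := by
  have := Real.cosh_pos x
  have := Real.cosh_pos y
  rw [Real.tanh_eq_sinh_div_cosh, Real.tanh_eq_sinh_div_cosh, Real.tanh_eq_sinh_div_cosh,
    Real.sinh_add, Real.cosh_add]
  field_simp

theorem Real.tanh_nonneg {x : ℝ} (hx : 0 ≤ x) : 0 ≤ Real.tanh x := by
  rw [Real.tanh_eq_sinh_div_cosh]
  exact div_nonneg (Real.sinh_nonneg_iff.mpr hx) (Real.cosh_pos x).le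

theorem Real.abs_tanh (x : ℝ) : |Real.tanh x| = Real.tanh |x| := by
  rcases le_total 0 x with hx | hx
  · rw [abs_of_nonneg hx, abs_of_nonneg (Real.tanh_nonneg hx)]
  · have := Real.tanh_nonneg (neg_nonneg.mpr hx)
    rw [Real.tanh_neg] at this
    rw [abs_of_nonpos hx, abs_of_nonpos (by linarith), Real.tanh_neg]

theorem artanh_eq_real_artanh {x : ℝ} (hx : x ∈ Icc (-1) 1) : artanh x = Real.artanh x :=
  (Real.artanh_eq_half_log hx).symm

theorem artanh_tanh (x : ℝ) : artanh (Real.tanh x) = x := by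
  rw [artanh_eq_real_artanh ⟨(Real.neg_one_lt_tanh x).le, (Real.tanh_lt_one x).le⟩,
    Real.artanh_tanh]

theorem artanh_abs_tanh (x : ℝ) : artanh |Real.tanh x| = |x| := by
  rw [Real.abs_tanh, artanh_tanh]

theorem artanh_le_artanh {x y : ℝ} (hx : -1 < x) (hy : y < 1) (hxy : x ≤ y) :
    artanh x ≤ artanh y := by
  rw [artanh_eq_real_artanh ⟨hx.le, by linarith⟩, artanh_eq_real_artanh ⟨by linarith, hy.le⟩]
  exact Real.artanh_le_artanh hx hy hxy

theorem sq_norm_one_sub_conj_mul_sub_sq_norm_sub (z w : ℂ) :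
    ‖1 - (starRingEnd ℂ) w * z‖ ^ 2 - ‖z - w‖ ^ 2 = (1 - ‖z‖ ^ 2) * (1 - ‖w‖ ^ 2) := by
  simp only [Complex.sq_norm, Complex.normSq_apply, Complex.sub_re, Complex.sub_im,
    Complex.mul_re, Complex.mul_im, Complex.one_re, Complex.one_im, Complex.conj_re,
    Complex.conj_im]
  ring

theorem norm_sub_div_one_sub_conj_mul_le {z w : ℂ} (hz : ‖z‖ ≤ 1) (hw : ‖w‖ ≤ 1) :
    ‖(z - w) / (1 - (starRingEnd ℂ) w * z)‖ ≤ (‖z‖ + ‖w‖) / (1 + ‖z‖ * ‖w‖) := by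
  have hid := sq_norm_one_sub_conj_mul_sub_sq_norm_sub z w
  set a := ‖z‖
  set b := ‖w‖
  set A := ‖z - w‖
  set B := ‖1 - (starRingEnd ℂ) w * z‖
  have ha : 0 ≤ a := norm_nonneg z
  have hb : 0 ≤ b := norm_nonneg w
  have hB : B ≤ 1 + a * b := by
    refine (norm_sub_le _ _).trans_eq ?_
    rw [norm_one, norm_mul, Complex.norm_conj, mul_comm]
  have hK : 0 ≤ (1 - a ^ 2) * (1 - b ^ 2) := by
    apply mul_nonneg <;> nlinarith
  -- `1 - (A / B) ^ 2 = (1 - a ^ 2) * (1 - b ^ 2) / B ^ 2` decreases in `B`, and the bound is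
  -- its value at `B = 1 + a * b`
  have hsq : ((a + b) * B) ^ 2 - (A * (1 + a * b)) ^ 2
      = (1 - a ^ 2) * (1 - b ^ 2) * ((1 + a * b) ^ 2 - B ^ 2) := by
    linear_combination (1 + a * b) ^ 2 * hid
  have hcross : A * (1 + a * b) ≤ (a + b) * B := by
    refine (pow_le_pow_iff_left₀ (by positivity) (by positivity) two_ne_zero).mp ?_
    nlinarith [mul_le_mul_of_nonneg_left (pow_le_pow_left₀ (norm_nonneg _) hB 2) hK]
  rw [norm_div]
  refine div_le_of_le_mul₀ (norm_nonneg _) (by positivity) ?_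
  rwa [div_mul_eq_mul_div, le_div_iff₀ (by positivity)]

theorem pd_zero_right (z : ℂ) : pd z 0 = artanh ‖z‖ := by
  simp [pd]

theorem pd_le_artanh_norm_add_artanh_norm {z w : ℂ} (hz : ‖z‖ < 1) (hw : ‖w‖ < 1) :
    pd z w ≤ artanh ‖z‖ + artanh ‖w‖ := by
  have hz' : -1 < ‖z‖ := neg_one_lt_zero.trans_le (norm_nonneg z)
  have hw' : -1 < ‖w‖ := neg_one_lt_zero.trans_le (norm_nonneg w)
  have hu := Real.tanh_artanh ⟨hz', hz⟩
  have hv := Real.tanh_artanh ⟨hw', hw⟩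
  set u := Real.artanh ‖z‖
  set v := Real.artanh ‖w‖
  calc pd z w ≤ artanh ((‖z‖ + ‖w‖) / (1 + ‖z‖ * ‖w‖)) := by
        refine artanh_le_artanh (neg_one_lt_zero.trans_le (norm_nonneg _)) ?_
          (norm_sub_div_one_sub_conj_mul_le hz.le hw.le)
        rw [← hu, ← hv, ← Real.tanh_add]
        exact Real.tanh_lt_one _
    _ = u + v := by rw [← hu, ← hv, ← Real.tanh_add, artanh_tanh]
    _ = artanh ‖z‖ + artanh ‖w‖ := by
        rw [artanh_eq_real_artanh ⟨hz'.le, hz.le⟩, artanh_eq_real_artanh ⟨hw'.le, hw.le⟩]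

theorem pd_tanh_neg_tanh (t s : ℝ) :
    pd (Real.tanh t : ℂ) (-(Real.tanh s) : ℂ) = |t + s| := by
  have hmob : ((Real.tanh t : ℂ) - (-(Real.tanh s) : ℂ)) /
      (1 - (starRingEnd ℂ) (-(Real.tanh s) : ℂ) * (Real.tanh t : ℂ)) =
        ((Real.tanh (t + s) : ℝ) : ℂ) := by
    rw [Real.tanh_add, map_neg, Complex.conj_ofReal]
    push_cast
    ring
  rw [pd, hmob, Complex.norm_real, Real.norm_eq_abs, artanh_abs_tanh]

theorem gromov_product_eq_zero_bidisc (t s : ℝ) (ht : 0 ≤ t) (hs : 0 ≤ s)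
    (f g : ℂ) (hf : ‖f‖ < 1) (hg : ‖g‖ < 1)
    (hft : artanh ‖f‖ ≤ t) (hgs : artanh ‖g‖ ≤ s) :
    (1 / 2) * (kd2 ((Real.tanh t : ℂ), f) ((0 : ℂ), (0 : ℂ)) +
        kd2 ((-(Real.tanh s) : ℂ), g) ((0 : ℂ), (0 : ℂ)) -
        kd2 ((Real.tanh t : ℂ), f) ((-(Real.tanh s) : ℂ), g)) = 0 := by
  have hxo : kd2 ((Real.tanh t : ℂ), f) ((0 : ℂ), (0 : ℂ)) = t := by
    rw [kd2, pd_zero_right, pd_zero_right, Complex.norm_real, Real.norm_eq_abs, artanh_abs_tanh,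
      abs_of_nonneg ht]
    exact max_eq_left hft
  have hyo : kd2 ((-(Real.tanh s) : ℂ), g) ((0 : ℂ), (0 : ℂ)) = s := by
    rw [kd2, pd_zero_right, pd_zero_right, norm_neg, Complex.norm_real, Real.norm_eq_abs,
      artanh_abs_tanh, abs_of_nonneg hs]
    exact max_eq_left hgs
  have hxy : kd2 ((Real.tanh t : ℂ), f) ((-(Real.tanh s) : ℂ), g) = t + s := by
    rw [kd2, pd_tanh_neg_tanh, abs_of_nonneg (add_nonneg ht hs)]
    exact max_eq_left ((pd_le_artanh_norm_add_artanh_norm hf hg).trans (add_le_add hft hgs))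
  rw [hxo, hyo, hxy]
  ring
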